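/- arXiv:2306.07381 — 4 statements merged into one kernel-verified Lean document; each statement's English description precedes it below -/
import Mathlib

section
/- Let α > 1, σ > 0, and μ, ν ∈ ℝ. Then the Rényi divergence of order α between the one-dimensional Gaussian measures N(μ, σ²) and N(ν, σ²) equals α(μ − ν)²/(2σ²), i.e. D_α(N(μ,σ²) ‖ N(ν,σ²)) = α(μ − ν)²/(2σ²). -/
open MeasureTheory ProbabilityTheory

/-- Rényi divergence of order `α`:
`D_α(P‖Q) = (1/(α−1)) · log ∫ (dP/dQ)^α dQ`, valued in the extended reals. -/
noncomputable def renyiDiv {X : Type*} [MeasurableSpace X] (α : ℝ) (P Q : Measure X) : EReal :=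
  ((α - 1)⁻¹ : ℝ) * ENNReal.log (∫⁻ x, P.rnDeriv Q x ^ α ∂Q)

lemma key_real (α σ μ ν x : ℝ) (hα : 1 < α) (hσ : 0 < σ) :
    gaussianPDFReal ν ⟨σ ^ 2, sq_nonneg σ⟩ x *
        (gaussianPDFReal μ ⟨σ ^ 2, sq_nonneg σ⟩ x /
          gaussianPDFReal ν ⟨σ ^ 2, sq_nonneg σ⟩ x) ^ α
      = Real.exp (α * (α - 1) * (μ - ν) ^ 2 / (2 * σ ^ 2)) *
          gaussianPDFReal (α * μ + (1 - α) * ν) ⟨σ ^ 2, sq_nonneg σ⟩ x := by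
  have hv : ((⟨σ ^ 2, sq_nonneg σ⟩ : NNReal) : ℝ) = σ ^ 2 := rfl
  simp only [gaussianPDFReal, NNReal.coe_mk, NNReal.toReal]
  have hc : (0 : ℝ) < (Real.sqrt (2 * Real.pi * σ ^ 2))⁻¹ := by
    positivity
  set c : ℝ := (Real.sqrt (2 * Real.pi * σ ^ 2))⁻¹ with hcdef
  have hexp : ∀ a b : ℝ, c * Real.exp a / (c * Real.exp b) = Real.exp (a - b) := by
    intro a b
    rw [mul_div_mul_left _ _ hc.ne', ← Real.exp_sub]
  rw [hexp, ← Real.exp_mul]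
  have hσ2 : (2 : ℝ) * σ ^ 2 ≠ 0 := by positivity
  rw [show c * Real.exp (-(x - ν) ^ 2 / (2 * σ ^ 2)) *
        Real.exp ((-(x - μ) ^ 2 / (2 * σ ^ 2) - -(x - ν) ^ 2 / (2 * σ ^ 2)) * α)
      = c * (Real.exp (-(x - ν) ^ 2 / (2 * σ ^ 2)) *
        Real.exp ((-(x - μ) ^ 2 / (2 * σ ^ 2) - -(x - ν) ^ 2 / (2 * σ ^ 2)) * α)) by ring,
    ← Real.exp_add,
    show Real.exp (α * (α - 1) * (μ - ν) ^ 2 / (2 * σ ^ 2)) *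
        (c * Real.exp (-(x - (α * μ + (1 - α) * ν)) ^ 2 / (2 * σ ^ 2)))
      = c * (Real.exp (α * (α - 1) * (μ - ν) ^ 2 / (2 * σ ^ 2)) *
          Real.exp (-(x - (α * μ + (1 - α) * ν)) ^ 2 / (2 * σ ^ 2))) by ring,
    ← Real.exp_add]
  congr 1
  field_simp
  ring

theorem renyiDiv_gaussianReal (α σ μ ν : ℝ) (hα : 1 < α) (hσ : 0 < σ) :
    renyiDiv α (gaussianReal μ ⟨σ ^ 2, sq_nonneg σ⟩) (gaussianReal ν ⟨σ ^ 2, sq_nonneg σ⟩)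
      = ((α * (μ - ν) ^ 2 / (2 * σ ^ 2) : ℝ) : EReal) := by
  set v : NNReal := ⟨σ ^ 2, sq_nonneg σ⟩ with hvdef
  have hv0 : v ≠ 0 := by
    intro h
    have : (v : ℝ) = 0 := by rw [h]; simp
    simp only [hvdef, NNReal.coe_mk] at this
    exact (pow_pos hσ 2).ne' this
  have hP : gaussianReal μ v = volume.withDensity (gaussianPDF μ v) :=
    gaussianReal_of_var_ne_zero μ hv0
  have hQ : gaussianReal ν v = volume.withDensity (gaussianPDF ν v) :=
    gaussianReal_of_var_ne_zero ν hv0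
  set h : ℝ → ENNReal := fun x => gaussianPDF μ v x / gaussianPDF ν v x with hhdef
  have hh_meas : Measurable h :=
    (measurable_gaussianPDF μ v).div (measurable_gaussianPDF ν v)
  have hQh : (gaussianReal ν v).withDensity h = gaussianReal μ v := by
    rw [hQ, hP, ← withDensity_mul _ (measurable_gaussianPDF ν v) hh_meas]
    congr 1
    funext x
    simp only [hhdef, Pi.mul_apply]
    exact ENNReal.mul_div_cancel (gaussianPDF_pos ν hv0 x).ne' ENNReal.ofReal_ne_top
  have hrn : (gaussianReal μ v).rnDeriv (gaussianReal ν v) =ᵐ[gaussianReal ν v] h := by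
    conv_lhs => rw [← hQh]
    exact Measure.rnDeriv_withDensity _ hh_meas
  have hint : ∫⁻ x, (gaussianReal μ v).rnDeriv (gaussianReal ν v) x ^ α ∂(gaussianReal ν v)
      = ENNReal.ofReal (Real.exp (α * (α - 1) * (μ - ν) ^ 2 / (2 * σ ^ 2))) := by
    rw [lintegral_congr_ae (hrn.mono fun x hx => by rw [hx]), hQ,
      lintegral_withDensity_eq_lintegral_mul _ (measurable_gaussianPDF ν v)
        (hh_meas.pow_const α)]
    have hptwise : ∀ x, (gaussianPDF ν v * fun x => h x ^ α) x
        = ENNReal.ofReal (Real.exp (α * (α - 1) * (μ - ν) ^ 2 / (2 * σ ^ 2)) *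
            gaussianPDFReal (α * μ + (1 - α) * ν) v x) := by
      intro x
      have hgq : 0 < gaussianPDFReal ν v x := gaussianPDFReal_pos ν v x hv0
      have hgp : 0 < gaussianPDFReal μ v x := gaussianPDFReal_pos μ v x hv0
      simp only [Pi.mul_apply, hhdef, gaussianPDF]
      rw [← ENNReal.ofReal_div_of_pos hgq,
        ENNReal.ofReal_rpow_of_pos (div_pos hgp hgq),
        ← ENNReal.ofReal_mul (gaussianPDFReal_nonneg ν v x)]
      exact congrArg _ (key_real α σ μ ν x hα hσ)
    rw [lintegral_congr hptwise]
    simp_rw [ENNReal.ofReal_mul (Real.exp_pos _).le]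
    rw [lintegral_const_mul _ (measurable_gaussianPDFReal _ v).ennreal_ofReal,
      lintegral_gaussianPDFReal_eq_one _ hv0, mul_one]
  rw [renyiDiv, hint, ENNReal.log_ofReal_of_pos (Real.exp_pos _), Real.log_exp,
    ← EReal.coe_mul]
  congr 1
  have hα1 : α - 1 ≠ 0 := sub_ne_zero.mpr hα.ne'
  field_simp
end

section
/- (Adaptive composition of Rényi divergence bounds for two mechanisms.) Let α > 1, let P and Q be probability measures on a measurable space X with P ≪ Q, and let κ_P and κ_Q be Markov kernels from X to a measurable space Y such that κ_P(x) ≪ κ_Q(x) for every x ∈ X. If D_α(P ‖ Q) ≤ ε₁ and D_α(κ_P(x) ‖ κ_Q(x)) ≤ ε₂ for all x ∈ X, then the joint distributions on X × Y satisfy D_α(P ⊗ₖ κ_P ‖ Q ⊗ₖ κ_Q) ≤ ε₁ + ε₂, where P ⊗ₖ κ_P denotes the measure on X × Y obtained by drawing x ∼ P and then y ∼ κ_P(x). -/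
open MeasureTheory ProbabilityTheory
open scoped ENNReal

lemma renyiDiv_le_iff' {Z : Type*} [MeasurableSpace Z] {α ε : ℝ} (hα : 1 < α)
    (μ ν : Measure Z) :
    renyiDiv α μ ν ≤ (ε : EReal) ↔
      ∫⁻ z, μ.rnDeriv ν z ^ α ∂ν ≤ ENNReal.ofReal (Real.exp (ε * (α - 1))) := by
  have hpos : (0:ℝ) < α - 1 := sub_pos.mpr hα
  set A := ∫⁻ z, μ.rnDeriv ν z ^ α ∂ν with hA
  have key : ENNReal.log A ≤ ((ε * (α - 1) : ℝ) : EReal) ↔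
      A ≤ ENNReal.ofReal (Real.exp (ε * (α - 1))) := by
    constructor
    · intro h
      have := EReal.exp_monotone h
      rwa [ENNReal.exp_log, EReal.exp_coe] at this
    · intro h
      have : ENNReal.log A ≤ ENNReal.log (ENNReal.ofReal (Real.exp (ε * (α - 1)))) :=
        ENNReal.log_le_log_iff.mpr h
      rwa [show (ENNReal.ofReal (Real.exp (ε * (α - 1)))) = EReal.exp ((ε * (α - 1) : ℝ) : EReal)
        from (EReal.exp_coe _).symm, EReal.log_exp] at this
  rw [renyiDiv, ← key]
  constructor
  · intro h
    have h2 := mul_le_mul_of_nonneg_right h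
      (by exact_mod_cast hpos.le : (0:EReal) ≤ ((α - 1 : ℝ) : EReal))
    rwa [mul_comm (((α - 1)⁻¹ : ℝ) : EReal) (ENNReal.log A), mul_assoc, ← EReal.coe_mul,
      inv_mul_cancel₀ hpos.ne', EReal.coe_one, mul_one, ← EReal.coe_mul] at h2
  · intro h
    have h2 := mul_le_mul_of_nonneg_right h
      (by exact_mod_cast (inv_nonneg.mpr hpos.le) : (0:EReal) ≤ (((α - 1)⁻¹ : ℝ) : EReal))
    rwa [← EReal.coe_mul, mul_assoc, mul_inv_cancel₀ hpos.ne', mul_one,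
      mul_comm (ENNReal.log A)] at h2

lemma iSup_min_natCast_rpow {α : ℝ} (hα : 1 < α) (a : ℝ≥0∞) :
    ⨆ N : ℕ, min a (N : ℝ≥0∞) ^ α = a ^ α := by
  rcases eq_or_ne a ⊤ with rfl | ha
  · rw [ENNReal.top_rpow_of_pos (by linarith)]
    refine eq_top_iff.mpr ?_
    calc (⊤:ℝ≥0∞) = ⨆ N : ℕ, (N : ℝ≥0∞) := ENNReal.iSup_natCast.symm
    _ ≤ ⨆ N : ℕ, min ⊤ (N : ℝ≥0∞) ^ α := by
        refine iSup_mono fun N => ?_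
        rw [min_eq_right le_top]
        rcases Nat.eq_zero_or_pos N with rfl | hN
        · simp [ENNReal.zero_rpow_of_pos (by linarith : (0:ℝ) < α)]
        · have h1 : (1:ℝ≥0∞) ≤ (N : ℝ≥0∞) := by exact_mod_cast hN
          calc (N:ℝ≥0∞) = (N:ℝ≥0∞) ^ (1:ℝ) := (ENNReal.rpow_one _).symm
          _ ≤ (N:ℝ≥0∞) ^ α := ENNReal.rpow_le_rpow_of_exponent_le h1 (by linarith)
  · apply le_antisymm
    · exact iSup_le fun N => ENNReal.rpow_le_rpow (min_le_left _ _) (by linarith)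
    · obtain ⟨N, hN⟩ := ENNReal.exists_nat_gt ha
      exact le_iSup_of_le N (by rw [min_eq_left hN.le])

/-- Adaptive composition of Rényi divergence bounds: if `D_α(P‖Q) ≤ ε₁` and
`D_α(κ_P(x)‖κ_Q(x)) ≤ ε₂` for all `x`, then the joint distributions satisfy
`D_α(P ⊗ₖ κ_P ‖ Q ⊗ₖ κ_Q) ≤ ε₁ + ε₂`. -/
theorem renyiDiv_compProd_le
    {X Y : Type*} [MeasurableSpace X] [MeasurableSpace Y]
    (α ε₁ ε₂ : ℝ) (hα : 1 < α)
    (P Q : Measure X) [IsProbabilityMeasure P] [IsProbabilityMeasure Q]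
    (κP κQ : ProbabilityTheory.Kernel X Y)
    [ProbabilityTheory.IsMarkovKernel κP] [ProbabilityTheory.IsMarkovKernel κQ]
    (hPQ : P ≪ Q) (hκ : ∀ x : X, κP x ≪ κQ x)
    (h₁ : renyiDiv α P Q ≤ (ε₁ : EReal))
    (h₂ : ∀ x : X, renyiDiv α (κP x) (κQ x) ≤ (ε₂ : EReal)) :
    renyiDiv α (P.compProd κP) (Q.compProd κQ) ≤ ((ε₁ + ε₂ : ℝ) : EReal) := by
  have hα1 : (0:ℝ) < α - 1 := sub_pos.mpr hα
  have hα0 : (0:ℝ) < α := by linarith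
  set f := P.rnDeriv Q with hf_def
  have hf : Measurable f := Measure.measurable_rnDeriv P Q
  set μ := P.compProd κP with hμ_def
  set ν := Q.compProd κQ with hν_def
  set h := μ.rnDeriv ν with hh_def
  have hh : Measurable h := Measure.measurable_rnDeriv μ ν
  set C₁ := ENNReal.ofReal (Real.exp (ε₁ * (α - 1))) with hC₁
  set C₂ := ENNReal.ofReal (Real.exp (ε₂ * (α - 1))) with hC₂
  have hC₁top : C₁ ≠ ⊤ := ENNReal.ofReal_ne_top
  have hC₂top : C₂ ≠ ⊤ := ENNReal.ofReal_ne_top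
  have hA₁ : ∫⁻ x, f x ^ α ∂Q ≤ C₁ := (renyiDiv_le_iff' hα P Q).1 h₁
  have hA₂ : ∀ x, ∫⁻ y, (κP x).rnDeriv (κQ x) y ^ α ∂(κQ x) ≤ C₂ :=
    fun x => (renyiDiv_le_iff' hα _ _).1 (h₂ x)
  rw [renyiDiv_le_iff' hα]
  have hK : ENNReal.ofReal (Real.exp ((ε₁ + ε₂) * (α - 1))) = C₁ * C₂ := by
    rw [hC₁, hC₂, ← ENNReal.ofReal_mul (Real.exp_nonneg _), ← Real.exp_add]
    ring_nf
  rw [hK]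
  -- conjugate exponents
  have hconj : Real.HolderConjugate (α / (α - 1)) α := by
    constructor
    · rw [inv_div, inv_one, inv_eq_one_div, ← add_div, sub_add_cancel, div_self hα0.ne']
    · exact div_pos hα0 hα1
    · exact hα0
  have hexp1 : (α - 1) * (α / (α - 1)) = α := by field_simp
  have hexp2 : ((α - 1) / α) * (α / (α - 1)) = 1 := by field_simp
  have hexp3 : 1 / (α / (α - 1)) = (α - 1) / α := one_div_div _ _
  -- key truncated bound
  have key : ∀ N : ℕ, ∫⁻ z, min (h z) (N : ℝ≥0∞) ^ α ∂ν ≤ C₁ * C₂ := by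
    intro N
    set g : X × Y → ℝ≥0∞ := fun z => min (h z) (N : ℝ≥0∞) with hg_def
    have hg : Measurable g := hh.min measurable_const
    have hgp : Measurable fun z => g z ^ (α - 1) := hg.pow_const _
    have hga : Measurable fun z => g z ^ α := hg.pow_const _
    set J := ∫⁻ z, g z ^ α ∂ν with hJ_def
    have hgle : ∀ z, g z ≤ (N : ℝ≥0∞) := fun z => min_le_right _ _
    have hgtop : ∀ z, g z ≠ ⊤ := fun z => ne_top_of_le_ne_top (ENNReal.natCast_ne_top N) (hgle z)
    have hJtop : J ≠ ⊤ := by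
      have hb : J ≤ ∫⁻ _z, (N:ℝ≥0∞) ^ α ∂ν := lintegral_mono fun z =>
        ENNReal.rpow_le_rpow (hgle z) hα0.le
      rw [lintegral_const, measure_univ, mul_one] at hb
      exact ne_top_of_le_ne_top (ENNReal.rpow_ne_top_of_nonneg hα0.le
        (ENNReal.natCast_ne_top N)) hb
    -- H : the fiberwise integral against κQ
    set H : X → ℝ≥0∞ := fun x => ∫⁻ y, g (x, y) ^ α ∂(κQ x) with hH_def
    have hH : Measurable H := by
      refine Measurable.lintegral_kernel_prod_right (f := fun x y => g (x, y) ^ α) ?_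
      exact hga
    have hHQ : ∫⁻ x, H x ∂Q = J := (Measure.lintegral_compProd hga).symm
    -- step 4 : fiberwise Hölder bound
    have step4 : ∀ x, ∫⁻ y, g (x, y) ^ (α - 1) ∂(κP x)
        ≤ H x ^ ((α - 1) / α) * C₂ ^ (1 / α) := by
      intro x
      have hv : Measurable ((κP x).rnDeriv (κQ x)) := Measure.measurable_rnDeriv _ _
      have hgx : Measurable fun y => g (x, y) := hg.comp measurable_prodMk_left
      have e1 : ∫⁻ y, g (x, y) ^ (α - 1) ∂(κP x)
          = ∫⁻ y, g (x, y) ^ (α - 1) * (κP x).rnDeriv (κQ x) y ∂(κQ x) := by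
        conv_lhs => rw [← Measure.withDensity_rnDeriv_eq _ _ (hκ x)]
        rw [lintegral_withDensity_eq_lintegral_mul _ hv (hgx.pow_const _)]
        exact lintegral_congr fun y => mul_comm _ _
      rw [e1]
      calc ∫⁻ y, g (x, y) ^ (α - 1) * (κP x).rnDeriv (κQ x) y ∂(κQ x)
          ≤ (∫⁻ y, (g (x, y) ^ (α - 1)) ^ (α / (α - 1)) ∂(κQ x)) ^ (1 / (α / (α - 1)))
            * (∫⁻ y, (κP x).rnDeriv (κQ x) y ^ α ∂(κQ x)) ^ (1 / α) :=
            ENNReal.lintegral_mul_le_Lp_mul_Lq _ hconj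
              (hgx.pow_const _).aemeasurable hv.aemeasurable
        _ = H x ^ ((α - 1) / α)
            * (∫⁻ y, (κP x).rnDeriv (κQ x) y ^ α ∂(κQ x)) ^ (1 / α) := by
            rw [hexp3]
            congr 2
            refine lintegral_congr fun y => ?_
            rw [← ENNReal.rpow_mul, hexp1]
        _ ≤ H x ^ ((α - 1) / α) * C₂ ^ (1 / α) :=
            mul_le_mul_right (ENNReal.rpow_le_rpow (hA₂ x) (by positivity)) _
    -- chain of inequalities
    have step6 : ∫⁻ x, H x ^ ((α - 1) / α) ∂P ≤ J ^ ((α - 1) / α) * C₁ ^ (1 / α) := by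
      have e2 : ∫⁻ x, H x ^ ((α - 1) / α) ∂P
          = ∫⁻ x, H x ^ ((α - 1) / α) * f x ∂Q := by
        conv_lhs => rw [← Measure.withDensity_rnDeriv_eq _ _ hPQ]
        rw [lintegral_withDensity_eq_lintegral_mul _ hf (hH.pow_const _)]
        exact lintegral_congr fun x => mul_comm _ _
      rw [e2]
      calc ∫⁻ x, H x ^ ((α - 1) / α) * f x ∂Q
          ≤ (∫⁻ x, (H x ^ ((α - 1) / α)) ^ (α / (α - 1)) ∂Q) ^ (1 / (α / (α - 1)))
            * (∫⁻ x, f x ^ α ∂Q) ^ (1 / α) :=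
            ENNReal.lintegral_mul_le_Lp_mul_Lq _ hconj
              (hH.pow_const _).aemeasurable hf.aemeasurable
        _ = J ^ ((α - 1) / α) * (∫⁻ x, f x ^ α ∂Q) ^ (1 / α) := by
            rw [hexp3]
            congr 2
            rw [← hHQ]
            refine lintegral_congr fun x => ?_
            rw [← ENNReal.rpow_mul, hexp2, ENNReal.rpow_one]
        _ ≤ J ^ ((α - 1) / α) * C₁ ^ (1 / α) :=
            mul_le_mul_right (ENNReal.rpow_le_rpow hA₁ (by positivity)) _
    have hmain : J ≤ J ^ ((α - 1) / α) * C₁ ^ (1 / α) * C₂ ^ (1 / α) := by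
      calc J ≤ ∫⁻ z, g z ^ (α - 1) * h z ∂ν := by
            refine lintegral_mono fun z => ?_
            rcases eq_or_ne (g z) 0 with h0 | h0
            · rw [h0, ENNReal.zero_rpow_of_pos hα0]
              exact zero_le
            · have hsplit : g z ^ α = g z ^ (α - 1) * g z := by
                conv_lhs => rw [show α = (α - 1) + 1 by ring]
                rw [ENNReal.rpow_add _ _ h0 (hgtop z), ENNReal.rpow_one]
              rw [hsplit]
              exact mul_le_mul_right (min_le_left _ _) _
        _ = ∫⁻ z, g z ^ (α - 1) ∂(ν.withDensity h) := by
            rw [lintegral_withDensity_eq_lintegral_mul _ hh hgp]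
            exact lintegral_congr fun z => mul_comm _ _
        _ ≤ ∫⁻ z, g z ^ (α - 1) ∂μ :=
            lintegral_mono' (Measure.withDensity_rnDeriv_le μ ν) le_rfl
        _ = ∫⁻ x, ∫⁻ y, g (x, y) ^ (α - 1) ∂(κP x) ∂P := Measure.lintegral_compProd hgp
        _ ≤ ∫⁻ x, H x ^ ((α - 1) / α) * C₂ ^ (1 / α) ∂P := lintegral_mono step4
        _ = (∫⁻ x, H x ^ ((α - 1) / α) ∂P) * C₂ ^ (1 / α) :=
            lintegral_mul_const' _ _ (ENNReal.rpow_ne_top_of_nonneg (by positivity) hC₂top)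
        _ ≤ J ^ ((α - 1) / α) * C₁ ^ (1 / α) * C₂ ^ (1 / α) :=
            mul_le_mul_left step6 _
    -- algebra to conclude J ≤ C₁ * C₂
    rcases eq_or_ne J 0 with hJ0 | hJ0
    · calc J = 0 := hJ0
        _ ≤ C₁ * C₂ := zero_le
    · have hJx0 : J ^ ((α - 1) / α) ≠ 0 := by
        simp only [ne_eq, ENNReal.rpow_eq_zero_iff, not_or]
        constructor
        · rintro ⟨h0, -⟩; exact hJ0 h0
        · rintro ⟨htop, -⟩; exact hJtop htop
      have hJxt : J ^ ((α - 1) / α) ≠ ⊤ :=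
        ENNReal.rpow_ne_top_of_nonneg (by positivity) hJtop
      have hsplitJ : J = J ^ (1 / α) * J ^ ((α - 1) / α) := by
        rw [← ENNReal.rpow_add _ _ hJ0 hJtop, show 1 / α + (α - 1) / α = 1 by field_simp; ring,
          ENNReal.rpow_one]
      have h5 : J ^ (1 / α) * J ^ ((α - 1) / α) ≤ C₁ ^ (1 / α) * C₂ ^ (1 / α) * J ^ ((α - 1) / α) := by
        rw [← hsplitJ]
        calc J ≤ J ^ ((α - 1) / α) * C₁ ^ (1 / α) * C₂ ^ (1 / α) := hmain
          _ = C₁ ^ (1 / α) * C₂ ^ (1 / α) * J ^ ((α - 1) / α) := by ring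
      have h6 : J ^ (1 / α) ≤ C₁ ^ (1 / α) * C₂ ^ (1 / α) :=
        (ENNReal.mul_le_mul_iff_left hJx0 hJxt).mp h5
      have h7 : J ^ (1 / α) ≤ (C₁ * C₂) ^ (1 / α) := by
        rwa [ENNReal.mul_rpow_of_nonneg _ _ (by positivity)]
      calc J = (J ^ (1 / α)) ^ α := by
            rw [← ENNReal.rpow_mul, one_div, inv_mul_cancel₀ hα0.ne', ENNReal.rpow_one]
        _ ≤ ((C₁ * C₂) ^ (1 / α)) ^ α := ENNReal.rpow_le_rpow h7 hα0.le
        _ = C₁ * C₂ := by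
            rw [← ENNReal.rpow_mul, one_div, inv_mul_cancel₀ hα0.ne', ENNReal.rpow_one]
  -- monotone convergence
  have hsup : ∫⁻ z, h z ^ α ∂ν = ⨆ N : ℕ, ∫⁻ z, min (h z) (N : ℝ≥0∞) ^ α ∂ν := by
    rw [← lintegral_iSup (fun N => (hh.min measurable_const).pow_const _)]
    · exact lintegral_congr fun z => (iSup_min_natCast_rpow hα (h z)).symm
    · intro i j hij z
      exact ENNReal.rpow_le_rpow (min_le_min le_rfl (by exact_mod_cast hij)) hα0.le
  rw [hsup]
  exact iSup_le key
end

section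
/- (Conversion from a Rényi divergence bound to an (ε, δ)-DP-style guarantee.) Let α > 1, ε ≥ 0, and δ ∈ (0, 1). Let P and Q be probability measures on a measurable space with P ≪ Q and D_α(P ‖ Q) ≤ ε. Then for every measurable set E, P(E) ≤ exp(ε + log(1/δ)/(α − 1)) · Q(E) + δ. -/
open MeasureTheory ProbabilityTheory
open scoped ENNReal

/-- Conversion from an `(α, ε)`-Rényi divergence bound to an `(ε', δ)`-DP-style guarantee:
if `D_α(P‖Q) ≤ ε` then `P(E) ≤ exp(ε + log(1/δ)/(α−1)) · Q(E) + δ` for every measurable `E`. -/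
theorem renyiDiv_to_approxDP
    {X : Type*} [MeasurableSpace X]
    (α ε δ : ℝ) (hα : 1 < α) (hε : 0 ≤ ε) (hδ0 : 0 < δ) (hδ1 : δ < 1)
    (P Q : Measure X) [IsProbabilityMeasure P] [IsProbabilityMeasure Q]
    (hPQ : P ≪ Q) (hD : renyiDiv α P Q ≤ (ε : EReal)) :
    ∀ E : Set X, MeasurableSet E →
      P E ≤ ENNReal.ofReal (Real.exp (ε + Real.log (1 / δ) / (α - 1))) * Q E
        + ENNReal.ofReal δ := by
  intro E hE
  set f := P.rnDeriv Q with hf_def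
  have hf : Measurable f := Measure.measurable_rnDeriv P Q
  have hα1 : (0:ℝ) < α - 1 := by linarith
  set c : ℝ := ε + Real.log (1 / δ) / (α - 1) with hc_def
  set t : ℝ≥0∞ := ENNReal.ofReal (Real.exp c) with ht_def
  have ht0 : t ≠ 0 := by
    simp [ht_def, ENNReal.ofReal_eq_zero, not_le, Real.exp_pos]
  have httop : t ≠ ∞ := ENNReal.ofReal_ne_top
  -- Step 1 : integral bound from the Rényi divergence bound
  have hI : (∫⁻ x, f x ^ α ∂Q) ≤ ENNReal.ofReal (Real.exp ((α - 1) * ε)) := by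
    have hkey : ∀ L : EReal, ((α - 1)⁻¹ : ℝ) * L ≤ (ε : EReal) →
        L ≤ (((α - 1) * ε : ℝ) : EReal) := by
      intro L hD
      induction L using EReal.rec with
      | bot => exact bot_le
      | coe x =>
        rw [← EReal.coe_mul, EReal.coe_le_coe_iff] at hD
        rw [EReal.coe_le_coe_iff]
        have h' : (α - 1)⁻¹ > 0 := inv_pos.mpr hα1
        nlinarith [mul_le_mul_of_nonneg_left hD (le_of_lt hα1),
          mul_inv_cancel₀ (ne_of_gt hα1)]
      | top =>
        rw [EReal.coe_mul_top_of_pos (inv_pos.mpr hα1)] at hD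
        exact absurd hD (EReal.coe_lt_top ε).not_ge
    have hL : ENNReal.log (∫⁻ x, f x ^ α ∂Q) ≤ (((α - 1) * ε : ℝ) : EReal) := by
      unfold renyiDiv at hD
      exact hkey _ hD
    calc (∫⁻ x, f x ^ α ∂Q) = EReal.exp (ENNReal.log (∫⁻ x, f x ^ α ∂Q)) :=
          (ENNReal.exp_log _).symm
      _ ≤ EReal.exp (((α - 1) * ε : ℝ) : EReal) := EReal.exp_monotone hL
      _ = ENNReal.ofReal (Real.exp ((α - 1) * ε)) := EReal.exp_coe _
  -- Step 2 : decompose P E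
  have hS : MeasurableSet {x | t < f x} := hf measurableSet_Ioi
  have hPE : P E = ∫⁻ x in E, f x ∂Q := (Measure.setLIntegral_rnDeriv hPQ E).symm
  have hsplit : P E ≤ t * Q E + ∫⁻ x in {x | t < f x}, f x ∂Q := by
    rw [hPE]
    have hptw : ∀ x, f x ≤ min (f x) t + Set.indicator {x | t < f x} f x := by
      intro x
      by_cases h : t < f x
      · calc f x = Set.indicator {x | t < f x} f x :=
              (Set.indicator_of_mem (show x ∈ {x | t < f x} from h) f).symm
          _ ≤ _ := le_add_self
      · calc f x = min (f x) t := (min_eq_left (not_lt.mp h)).symm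
          _ ≤ _ := le_add_right le_rfl
    calc ∫⁻ x in E, f x ∂Q
        ≤ ∫⁻ x in E, (min (f x) t + Set.indicator {x | t < f x} f x) ∂Q :=
          lintegral_mono hptw
      _ = (∫⁻ x in E, min (f x) t ∂Q) + ∫⁻ x in E, Set.indicator {x | t < f x} f x ∂Q :=
          lintegral_add_left (hf.min measurable_const) _
      _ ≤ t * Q E + ∫⁻ x in {x | t < f x}, f x ∂Q := by
          refine add_le_add ?_ ?_
          · calc (∫⁻ x in E, min (f x) t ∂Q) ≤ ∫⁻ _ in E, t ∂Q :=
                lintegral_mono fun x => min_le_right _ _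
              _ = t * Q E := setLIntegral_const E t
          · calc (∫⁻ x in E, Set.indicator {x | t < f x} f x ∂Q)
                ≤ ∫⁻ x, Set.indicator {x | t < f x} f x ∂Q := setLIntegral_le_lintegral _ _
              _ = ∫⁻ x in {x | t < f x}, f x ∂Q := lintegral_indicator hS f
  -- Step 3 : Markov-type bound on the tail
  have htail : (∫⁻ x in {x | t < f x}, f x ∂Q) ≤ ENNReal.ofReal δ := by
    have hptw : ∀ x ∈ {x | t < f x}, f x ≤ f x ^ α * t ^ (1 - α) := by
      intro x hx
      have hx' : t < f x := hx
      have htpow0 : t ^ (1 - α) ≠ 0 := by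
        simp [ENNReal.rpow_eq_zero_iff, ht0, httop]
      by_cases hfin : f x = ∞
      · rw [hfin]
        rw [show (∞ : ℝ≥0∞) ^ α = ∞ from ENNReal.top_rpow_of_pos (by linarith)]
        rw [ENNReal.top_mul htpow0]
      · have hfx0 : f x ≠ 0 := (lt_of_le_of_lt (zero_le : (0:ℝ≥0∞) ≤ t) hx').ne'
        have h1 : f x * f x ^ (α - 1) = f x ^ α := by
          nth_rewrite 1 [← ENNReal.rpow_one (f x)]
          rw [← ENNReal.rpow_add _ _ hfx0 hfin]
          norm_num
        have h2 : t ^ (α - 1) * t ^ (1 - α) = 1 := by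
          rw [← ENNReal.rpow_add _ _ ht0 httop]
          norm_num
        calc f x = f x * 1 := (mul_one _).symm
          _ = f x * (t ^ (α - 1) * t ^ (1 - α)) := by rw [h2]
          _ ≤ f x * (f x ^ (α - 1) * t ^ (1 - α)) := by
              gcongr
          _ = f x ^ α * t ^ (1 - α) := by rw [← mul_assoc, h1]
    calc (∫⁻ x in {x | t < f x}, f x ∂Q)
        ≤ ∫⁻ x in {x | t < f x}, f x ^ α * t ^ (1 - α) ∂Q :=
          setLIntegral_mono ((hf.pow_const α).mul_const _) hptw
      _ = (∫⁻ x in {x | t < f x}, f x ^ α ∂Q) * t ^ (1 - α) :=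
          lintegral_mul_const _ (hf.pow_const α)
      _ ≤ (∫⁻ x, f x ^ α ∂Q) * t ^ (1 - α) := by
          gcongr; exact Measure.restrict_le_self
      _ ≤ ENNReal.ofReal (Real.exp ((α - 1) * ε)) * t ^ (1 - α) := by gcongr
      _ = ENNReal.ofReal δ := by
          rw [ht_def, ENNReal.ofReal_rpow_of_pos (Real.exp_pos c),
            Real.rpow_def_of_pos (Real.exp_pos c), Real.log_exp,
            ← ENNReal.ofReal_mul (Real.exp_nonneg _), ← Real.exp_add]
          congr 1
          rw [show (α - 1) * ε + c * (1 - α) = Real.log δ by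
            rw [hc_def, one_div, Real.log_inv]; field_simp; ring]
          exact Real.exp_log hδ0
  calc P E ≤ t * Q E + ∫⁻ x in {x | t < f x}, f x ∂Q := hsplit
    _ ≤ t * Q E + ENNReal.ofReal δ := by gcongr
end

section
/- (DP guarantee of the composed Gaussian mechanism under individual budgets.) Let Z be a type, T ≥ 1, d ≥ 1, and for each t ∈ [T] let q_t : Z → ℝ^d be a function and σ_t > 0 a noise scale. Fix B ≥ 0, α > 1, and δ ∈ (0, 1). For a finite tuple S = (z₁, …, z_n), let A(S) = ⊗_{t=1}^T N(∑_{j∈[n]} q_t(z_j), σ_t²I_d) on (ℝ^d)^T. If ∑_{t=1}^T ‖q_t(z_i)‖₂²/(2σ_t²) ≤ B for every index i ∈ [n], then for every index i and every measurable set E ⊆ (ℝ^d)^T, both Pr[A(S) ∈ E] ≤ exp(αB + log(1/δ)/(α − 1)) · Pr[A(S^{−i}) ∈ E] + δ and Pr[A(S^{−i}) ∈ E] ≤ exp(αB + log(1/δ)/(α − 1)) · Pr[A(S) ∈ E] + δ; i.e. the composed mechanism is (αB + log(1/δ)/(α − 1), δ)-differentially private with respect to removal of one element. -/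
open MeasureTheory ProbabilityTheory

/-- The Gaussian measure `N(μ, σ²I_d)` on `ℝ^d`. -/
noncomputable def gaussianPi {d : ℕ} (μ : Fin d → ℝ) (σ : ℝ) : Measure (Fin d → ℝ) :=
  Measure.pi fun j => gaussianReal (μ j) ⟨σ ^ 2, sq_nonneg σ⟩

section Aux

open ENNReal

theorem my_lintegral_fin_pi_prod : ∀ {nn : ℕ} {E : Fin nn → Type} [∀ i, MeasurableSpace (E i)]
    (μ : ∀ i, Measure (E i)) [∀ i, SigmaFinite (μ i)] (f : ∀ i, E i → ℝ≥0∞)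
    (_ : ∀ i, Measurable (f i)),
    ∫⁻ x, ∏ i, f i (x i) ∂Measure.pi μ = ∏ i, ∫⁻ x, f i x ∂μ i := by
  intro nn
  induction nn with
  | zero =>
    intro E _ μ _ f hf
    simp [Measure.pi_of_empty, lintegral_dirac]
  | succ m ih =>
    intro E _ μ _ f hf
    have hmp := MeasurePreserving.symm _ (measurePreserving_piFinSuccAbove μ 0)
    rw [← hmp.lintegral_comp_emb (MeasurableEquiv.measurableEmbedding _)]
    simp_rw [MeasurableEquiv.piFinSuccAbove_symm_apply, Fin.insertNthEquiv,
      Fin.prod_univ_succ, Fin.insertNth_zero]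
    simp only [Fin.zero_succAbove, cast_eq, Function.comp_def, Fin.cons_zero, Fin.cons_succ,
      Equiv.coe_fn_mk]
    have hmeas : Measurable fun (x : ∀ i : Fin m, E i.succ) => ∏ i : Fin m, f i.succ (x i) :=
      Finset.measurable_prod _ fun i _ => (hf i.succ).comp (measurable_pi_apply i)
    erw [lintegral_prod_mul (ν := Measure.pi fun j : Fin m => μ (Fin.succAbove 0 j)) (hf 0).aemeasurable hmeas.aemeasurable]
    erw [ih (fun i => μ i.succ) (fun i => f i.succ) (fun i => hf i.succ)]

theorem my_pi_withDensity {nn : ℕ} {E : Fin nn → Type} [∀ i, MeasurableSpace (E i)]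
    (μ : ∀ i, Measure (E i)) [∀ i, SigmaFinite (μ i)] (f : ∀ i, E i → ℝ≥0∞)
    (hf : ∀ i, Measurable (f i)) (hsf : ∀ i, SigmaFinite ((μ i).withDensity (f i))) :
    Measure.pi (fun i => (μ i).withDensity (f i))
      = (Measure.pi μ).withDensity (fun x => ∏ i, f i (x i)) := by
  haveI := hsf
  refine (Measure.pi_eq (μ := fun i => (μ i).withDensity (f i))
    (μ' := (Measure.pi μ).withDensity (fun x => ∏ i, f i (x i))) fun s hs => ?_)
  rw [withDensity_apply _ (MeasurableSet.univ_pi hs),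
    ← lintegral_indicator (MeasurableSet.univ_pi hs) (fun a => ∏ i, f i (a i))]
  have hind : (Set.univ.pi s).indicator (fun x => ∏ i, f i (x i))
      = fun x => ∏ i, (s i).indicator (f i) (x i) := by
    ext x
    by_cases hx : x ∈ Set.univ.pi s
    · rw [Set.indicator_of_mem hx]
      exact Finset.prod_congr rfl fun i _ =>
        (Set.indicator_of_mem (hx i (Set.mem_univ i)) _).symm
    · rw [Set.indicator_of_notMem hx]
      obtain ⟨i, _, hi⟩ := Set.mem_pi.not.mp hx |> not_forall.mp |>.imp fun i h =>
        (_root_.not_imp.mp h)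
      exact (Finset.prod_eq_zero (Finset.mem_univ i)
        (Set.indicator_of_notMem hi _)).symm
  rw [hind, my_lintegral_fin_pi_prod μ _ (fun i => (hf i).indicator (hs i))]
  exact Finset.prod_congr rfl fun i _ => by
    rw [lintegral_indicator (hs i), ← withDensity_apply _ (hs i)]

theorem my_gauss_mgf (m u w σ : ℝ) (hσ : 0 < σ) :
    ∫⁻ x, ENNReal.ofReal (gaussianPDFReal m ⟨σ^2, sq_nonneg σ⟩ x
        * Real.exp ((2*u*(x - m) + w)/(2*σ^2)))
      = ENNReal.ofReal (Real.exp ((u^2 + w)/(2*σ^2))) := by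
  have hv : (⟨σ^2, sq_nonneg σ⟩ : NNReal) ≠ 0 := by
    simp [← NNReal.coe_ne_zero, (pow_pos hσ 2).ne']
  have key : ∀ x, gaussianPDFReal m ⟨σ^2, sq_nonneg σ⟩ x
      * Real.exp ((2*u*(x - m) + w)/(2*σ^2))
      = Real.exp ((u^2 + w)/(2*σ^2)) * gaussianPDFReal (m + u) ⟨σ^2, sq_nonneg σ⟩ x := by
    intro x
    simp only [gaussianPDFReal, NNReal.coe_mk]
    erw [NNReal.coe_mk]
    rw [mul_comm (Real.exp ((u ^ 2 + w) / (2 * σ ^ 2)))]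
    rw [mul_assoc ((Real.sqrt (2 * Real.pi * σ ^ 2))⁻¹), ← Real.exp_add]
    rw [mul_assoc ((Real.sqrt (2 * Real.pi * σ ^ 2))⁻¹), ← Real.exp_add]
    congr 2
    have h2 : (2:ℝ) * σ^2 ≠ 0 := by positivity
    field_simp
    ring
  simp_rw [key, ENNReal.ofReal_mul (Real.exp_nonneg _)]
  erw [lintegral_const_mul _ ((measurable_gaussianPDFReal _ _).ennreal_ofReal)]
  rw [lintegral_gaussianPDFReal_eq_one (m + u) hv, mul_one]

theorem my_dp_core {X : Type} [MeasurableSpace X] (M : Measure X)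
    (f g : X → ℝ≥0∞) (L : X → ℝ) (hf : Measurable f) (hg : Measurable g)
    (hL : Measurable L) (ε δ lam : ℝ) (hlam : 0 < lam)
    (hfg : ∀ x, L x ≤ ε → f x ≤ ENNReal.ofReal (Real.exp ε) * g x)
    (hmgf : ∫⁻ x, f x * ENNReal.ofReal (Real.exp (lam * (L x - ε))) ∂M
      ≤ ENNReal.ofReal δ)
    (E : Set X) (hE : MeasurableSet E) :
    M.withDensity f E ≤ ENNReal.ofReal (Real.exp ε) * M.withDensity g E
      + ENNReal.ofReal δ := by
  have hA : MeasurableSet {x | L x ≤ ε} := measurableSet_le hL measurable_const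
  rw [withDensity_apply _ hE, withDensity_apply _ hE]
  rw [← lintegral_inter_add_diff f E hA]
  gcongr
  · calc ∫⁻ x in E ∩ {x | L x ≤ ε}, f x ∂M
        ≤ ∫⁻ x in E ∩ {x | L x ≤ ε}, ENNReal.ofReal (Real.exp ε) * g x ∂M := by
          refine setLIntegral_mono (by fun_prop) fun x hx => hfg x hx.2
      _ ≤ ∫⁻ x in E, ENNReal.ofReal (Real.exp ε) * g x ∂M :=
          lintegral_mono_set Set.inter_subset_left
      _ = ENNReal.ofReal (Real.exp ε) * ∫⁻ x in E, g x ∂M := lintegral_const_mul _ hg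
  · calc ∫⁻ x in E \ {x | L x ≤ ε}, f x ∂M
        ≤ ∫⁻ x in E \ {x | L x ≤ ε},
            f x * ENNReal.ofReal (Real.exp (lam * (L x - ε))) ∂M := by
          refine setLIntegral_mono (by fun_prop) fun x hx => ?_
          have h1 : (1 : ℝ≥0∞) ≤ ENNReal.ofReal (Real.exp (lam * (L x - ε))) := by
            rw [ENNReal.one_le_ofReal, Real.one_le_exp_iff]
            have : ε < L x := lt_of_not_ge hx.2
            nlinarith
          calc f x = f x * 1 := (mul_one _).symm
            _ ≤ _ := by gcongr
      _ ≤ ∫⁻ x, f x * ENNReal.ofReal (Real.exp (lam * (L x - ε))) ∂M :=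
          setLIntegral_le_lintegral _ _
      _ ≤ ENNReal.ofReal δ := hmgf

theorem my_pi_gaussian_eq {T d : ℕ} (m : Fin T → Fin d → ℝ) (σ : Fin T → ℝ)
    (hσ : ∀ t, 0 < σ t) :
    Measure.pi (fun t => gaussianPi (m t) (σ t))
      = (Measure.pi fun _ : Fin T => Measure.pi fun _ : Fin d => (volume : Measure ℝ)).withDensity
          (fun x => ∏ t, ∏ j, gaussianPDF (m t j) ⟨σ t ^ 2, sq_nonneg (σ t)⟩ (x t j)) := by
  have hv : ∀ t, (⟨σ t ^ 2, sq_nonneg (σ t)⟩ : NNReal) ≠ 0 := fun t => by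
    simp [← NNReal.coe_ne_zero, (pow_pos (hσ t) 2).ne']
  have h1 : ∀ t, gaussianPi (m t) (σ t)
      = (Measure.pi fun _ : Fin d => (volume : Measure ℝ)).withDensity
          (fun y => ∏ j, gaussianPDF (m t j) ⟨σ t ^ 2, sq_nonneg (σ t)⟩ (y j)) := by
    intro t
    rw [gaussianPi]
    have : (fun j : Fin d => gaussianReal (m t j) ⟨σ t ^ 2, sq_nonneg (σ t)⟩)
        = fun j => (volume : Measure ℝ).withDensity
            (gaussianPDF (m t j) ⟨σ t ^ 2, sq_nonneg (σ t)⟩) := by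
      funext j; exact gaussianReal_of_var_ne_zero _ (hv t)
    rw [this]
    refine my_pi_withDensity _ _ (fun j => measurable_gaussianPDF _ _) (fun j => ?_)
    rw [← gaussianReal_of_var_ne_zero _ (hv t)]
    have := instIsProbabilityMeasureGaussianReal (m t j) ⟨σ t ^ 2, sq_nonneg (σ t)⟩
    infer_instance
  calc Measure.pi (fun t => gaussianPi (m t) (σ t))
      = Measure.pi (fun t => (Measure.pi fun _ : Fin d => (volume : Measure ℝ)).withDensity
          (fun y => ∏ j, gaussianPDF (m t j) ⟨σ t ^ 2, sq_nonneg (σ t)⟩ (y j))) := by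
        congr 1; funext t; exact h1 t
    _ = _ := by
        refine my_pi_withDensity _ _ (fun t => ?_) (fun t => ?_)
        · exact Finset.measurable_prod _ fun j _ =>
            (measurable_gaussianPDF _ _).comp (measurable_pi_apply j)
        · rw [← h1 t]
          unfold gaussianPi
          have := fun j => instIsProbabilityMeasureGaussianReal (m t j) ⟨σ t ^ 2, sq_nonneg (σ t)⟩
          infer_instance

theorem my_prod_prod_ofReal {T d : ℕ} (h : Fin T → Fin d → ℝ) (hh : ∀ t j, 0 ≤ h t j) :
    (∏ t, ∏ j, ENNReal.ofReal (h t j)) = ENNReal.ofReal (∏ t, ∏ j, h t j) := by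
  rw [ENNReal.ofReal_prod_of_nonneg (fun t _ => Finset.prod_nonneg fun j _ => hh t j)]
  exact Finset.prod_congr rfl fun t _ =>
    (ENNReal.ofReal_prod_of_nonneg (fun j _ => hh t j)).symm

theorem my_mgf_glue {T d : ℕ} (m u w : Fin T → Fin d → ℝ) (σ : Fin T → ℝ)
    (hσ : ∀ t, 0 < σ t) :
    ∫⁻ x, ∏ t, ∏ j, ENNReal.ofReal
        (gaussianPDFReal (m t j) ⟨σ t ^ 2, sq_nonneg (σ t)⟩ (x t j)
          * Real.exp ((2 * u t j * (x t j - m t j) + w t j)/(2 * σ t ^ 2)))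
        ∂(Measure.pi fun _ : Fin T => Measure.pi fun _ : Fin d => (volume : Measure ℝ))
      = ENNReal.ofReal (Real.exp (∑ t, ∑ j, ((u t j)^2 + w t j)/(2 * σ t ^ 2))) := by
  have hmeas1 : ∀ (t : Fin T) (j : Fin d), Measurable fun y : ℝ => ENNReal.ofReal
      (gaussianPDFReal (m t j) ⟨σ t ^ 2, sq_nonneg (σ t)⟩ y
        * Real.exp ((2 * u t j * (y - m t j) + w t j)/(2 * σ t ^ 2))) := by
    intro t j
    refine Measurable.ennreal_ofReal ?_
    exact (measurable_gaussianPDFReal _ _).mul (by fun_prop)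
  rw [my_lintegral_fin_pi_prod _
    (fun t (y : Fin d → ℝ) => ∏ j, ENNReal.ofReal
      (gaussianPDFReal (m t j) ⟨σ t ^ 2, sq_nonneg (σ t)⟩ (y j)
        * Real.exp ((2 * u t j * (y j - m t j) + w t j)/(2 * σ t ^ 2))))
    (fun t => Finset.measurable_prod _ fun j _ =>
      (hmeas1 t j).comp (measurable_pi_apply j))]
  have : ∀ t : Fin T, (∫⁻ y : Fin d → ℝ, ∏ j, ENNReal.ofReal
      (gaussianPDFReal (m t j) ⟨σ t ^ 2, sq_nonneg (σ t)⟩ (y j)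
        * Real.exp ((2 * u t j * (y j - m t j) + w t j)/(2 * σ t ^ 2)))
        ∂(Measure.pi fun _ : Fin d => (volume : Measure ℝ)))
      = ∏ j, ENNReal.ofReal (Real.exp (((u t j)^2 + w t j)/(2 * σ t ^ 2))) := by
    intro t
    rw [my_lintegral_fin_pi_prod _ _ (fun j => (hmeas1 t j))]
    exact Finset.prod_congr rfl fun j _ => my_gauss_mgf (m t j) (u t j) (w t j) (σ t) (hσ t)
  simp_rw [this]
  rw [my_prod_prod_ofReal _ (fun t j => Real.exp_nonneg _)]
  congr 1
  rw [Real.exp_sum]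
  exact Finset.prod_congr rfl fun t _ => (Real.exp_sum _ _).symm

theorem my_pdf_shift (a cc s y : ℝ) (hs : 0 < s) :
    gaussianPDFReal a ⟨s^2, sq_nonneg s⟩ y
      = gaussianPDFReal (a - cc) ⟨s^2, sq_nonneg s⟩ y
        * Real.exp ((2*cc*(y - a) + cc^2)/(2*s^2)) := by
  simp only [gaussianPDFReal, NNReal.coe_mk]
  erw [NNReal.coe_mk]
  rw [mul_assoc ((Real.sqrt (2 * Real.pi * s ^ 2))⁻¹), ← Real.exp_add]
  congr 2
  have h2 : (2:ℝ) * s^2 ≠ 0 := by positivity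
  field_simp
  ring

end Aux

/-- DP guarantee of the composed Gaussian mechanism under individual budgets: if every
data point's accumulated contribution satisfies `∑_t ‖q_t(z_i)‖₂²/(2σ_t²) ≤ B`, then the
composed mechanism is `(αB + log(1/δ)/(α−1), δ)`-differentially private with respect to
removal of one element. -/
theorem composed_gaussian_mechanism_DP
    {Z : Type*} {T d n : ℕ} (hT : 1 ≤ T) (hd : 1 ≤ d)
    (q : Fin T → Z → Fin d → ℝ) (σ : Fin T → ℝ) (hσ : ∀ t : Fin T, 0 < σ t)
    (B α δ : ℝ) (hB : 0 ≤ B) (hα : 1 < α) (hδ0 : 0 < δ) (hδ1 : δ < 1)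
    (S : Fin n → Z)
    (hbudget : ∀ i : Fin n, ∑ t, (∑ k, (q t (S i) k) ^ 2) / (2 * (σ t) ^ 2) ≤ B) :
    ∀ i : Fin n, ∀ E : Set (Fin T → Fin d → ℝ), MeasurableSet E →
      (Measure.pi fun t => gaussianPi (∑ j, q t (S j)) (σ t)) E
        ≤ ENNReal.ofReal (Real.exp (α * B + Real.log (1 / δ) / (α - 1)))
            * (Measure.pi fun t => gaussianPi (∑ j ∈ Finset.univ.erase i, q t (S j)) (σ t)) E
          + ENNReal.ofReal δ ∧
      (Measure.pi fun t => gaussianPi (∑ j ∈ Finset.univ.erase i, q t (S j)) (σ t)) E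
        ≤ ENNReal.ofReal (Real.exp (α * B + Real.log (1 / δ) / (α - 1)))
            * (Measure.pi fun t => gaussianPi (∑ j, q t (S j)) (σ t)) E
          + ENNReal.ofReal δ := by
  intro i E hE
  have hlam : 0 < α - 1 := by linarith
  -- notation
  set lam : ℝ := α - 1 with hlamdef
  set ε : ℝ := α * B + Real.log (1 / δ) / (α - 1) with hεdef
  let A : Fin T → Fin d → ℝ := fun t => ∑ j, q t (S j)
  let Bm : Fin T → Fin d → ℝ := fun t => ∑ j ∈ Finset.univ.erase i, q t (S j)
  let c : Fin T → Fin d → ℝ := fun t => q t (S i)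
  have hAB : ∀ t k, Bm t k = A t k - c t k := by
    intro t k
    have h := Finset.sum_erase_add Finset.univ (fun j => q t (S j) k) (Finset.mem_univ i)
    simp only [A, Bm, c, Finset.sum_apply]
    linarith
  let M : Measure (Fin T → Fin d → ℝ) :=
    Measure.pi fun _ : Fin T => Measure.pi fun _ : Fin d => (volume : Measure ℝ)
  let FR : (Fin T → Fin d → ℝ) → ℝ :=
    fun x => ∏ t, ∏ j, gaussianPDFReal (A t j) ⟨σ t ^ 2, sq_nonneg (σ t)⟩ (x t j)
  let GR : (Fin T → Fin d → ℝ) → ℝ :=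
    fun x => ∏ t, ∏ j, gaussianPDFReal (Bm t j) ⟨σ t ^ 2, sq_nonneg (σ t)⟩ (x t j)
  let L : (Fin T → Fin d → ℝ) → ℝ :=
    fun x => ∑ t, ∑ j, (2 * c t j * (x t j - A t j) + (c t j)^2) / (2 * σ t ^ 2)
  have hFRnn : ∀ x, 0 ≤ FR x := fun x =>
    Finset.prod_nonneg fun t _ => Finset.prod_nonneg fun j _ => gaussianPDFReal_nonneg _ _ _
  have hGRnn : ∀ x, 0 ≤ GR x := fun x =>
    Finset.prod_nonneg fun t _ => Finset.prod_nonneg fun j _ => gaussianPDFReal_nonneg _ _ _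
  have hFRmeas : Measurable FR := Finset.measurable_prod _ fun t _ =>
    Finset.measurable_prod _ fun j _ =>
      (measurable_gaussianPDFReal _ _).comp
        ((measurable_pi_apply j).comp (measurable_pi_apply t))
  have hGRmeas : Measurable GR := Finset.measurable_prod _ fun t _ =>
    Finset.measurable_prod _ fun j _ =>
      (measurable_gaussianPDFReal _ _).comp
        ((measurable_pi_apply j).comp (measurable_pi_apply t))
  have hLmeas : Measurable L := by
    refine Finset.measurable_sum _ fun t _ => Finset.measurable_sum _ fun j _ => ?_
    have : Measurable fun x : Fin T → Fin d → ℝ => x t j :=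
      (measurable_pi_apply j).comp (measurable_pi_apply t)
    fun_prop
  -- the key real identity: FR = GR * exp L
  have hreal : ∀ x, FR x = GR x * Real.exp (L x) := by
    intro x
    have : FR x = ∏ t, ∏ j,
        (gaussianPDFReal (Bm t j) ⟨σ t ^ 2, sq_nonneg (σ t)⟩ (x t j)
          * Real.exp ((2 * c t j * (x t j - A t j) + (c t j)^2) / (2 * σ t ^ 2))) := by
      refine Finset.prod_congr rfl fun t _ => Finset.prod_congr rfl fun j _ => ?_
      rw [hAB t j]
      exact my_pdf_shift (A t j) (c t j) (σ t) (x t j) (hσ t)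
    rw [this]
    simp_rw [Finset.prod_mul_distrib]
    congr 1
    rw [Real.exp_sum]
    exact Finset.prod_congr rfl fun t _ => (Real.exp_sum _ _).symm
  -- measures as densities
  have hmeq1 : (Measure.pi fun t => gaussianPi (∑ j, q t (S j)) (σ t))
      = M.withDensity fun x => ENNReal.ofReal (FR x) := by
    rw [my_pi_gaussian_eq A σ hσ]
    congr 1
    funext x
    simp_rw [gaussianPDF]
    exact my_prod_prod_ofReal _ fun t j => gaussianPDFReal_nonneg _ _ _
  have hmeq2 : (Measure.pi fun t => gaussianPi (∑ j ∈ Finset.univ.erase i, q t (S j)) (σ t))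
      = M.withDensity fun x => ENNReal.ofReal (GR x) := by
    rw [my_pi_gaussian_eq Bm σ hσ]
    congr 1
    funext x
    simp_rw [gaussianPDF]
    exact my_prod_prod_ofReal _ fun t j => gaussianPDFReal_nonneg _ _ _
  -- arithmetic: the budget bound
  have hρ : ∑ t, ∑ j, (c t j)^2 / (2 * σ t ^ 2) ≤ B := by
    have := hbudget i
    simp_rw [Finset.sum_div] at this
    exact this
  have harith : ∀ u : Fin T → Fin d → ℝ, (∀ t j, (u t j)^2 = (lam * c t j)^2) →
      Real.exp (-(lam * ε)) * Real.exp (∑ t, ∑ j,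
        ((u t j)^2 + lam * (c t j)^2) / (2 * σ t ^ 2)) ≤ δ := by
    intro u hu
    rw [← Real.exp_add]
    rw [show δ = Real.exp (Real.log δ) from (Real.exp_log hδ0).symm]
    rw [Real.exp_le_exp]
    have hsum : ∑ t, ∑ j, ((u t j)^2 + lam * (c t j)^2) / (2 * σ t ^ 2)
        = (lam * (lam + 1)) * ∑ t, ∑ j, (c t j)^2 / (2 * σ t ^ 2) := by
      rw [Finset.mul_sum]
      refine Finset.sum_congr rfl fun t _ => ?_
      rw [Finset.mul_sum]
      refine Finset.sum_congr rfl fun j _ => ?_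
      rw [hu t j]
      ring
    rw [hsum]
    have hlam1 : lam + 1 = α := by rw [hlamdef]; ring
    have hle : (lam * (lam + 1)) * ∑ t, ∑ j, (c t j)^2 / (2 * σ t ^ 2)
        ≤ lam * (lam + 1) * B := by
      apply mul_le_mul_of_nonneg_left hρ
      nlinarith
    have hlog : Real.log (1 / δ) = -Real.log δ := by
      rw [one_div, Real.log_inv]
    have hlamε : lam * ε = lam * (α * B) + Real.log (1 / δ) := by
      rw [hεdef, hlamdef]
      have hne : α - 1 ≠ 0 := ne_of_gt (by linarith)
      field_simp
    rw [hlamε, hlog, hlam1]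
    nlinarith
  -- the two MGF bounds
  have hmgf1 : ∫⁻ x, ENNReal.ofReal (FR x)
      * ENNReal.ofReal (Real.exp (lam * (L x - ε))) ∂M ≤ ENNReal.ofReal δ := by
    have hpt : ∀ x, ENNReal.ofReal (FR x) * ENNReal.ofReal (Real.exp (lam * (L x - ε)))
        = ENNReal.ofReal (Real.exp (-(lam * ε))) * ∏ t, ∏ j, ENNReal.ofReal
          (gaussianPDFReal (A t j) ⟨σ t ^ 2, sq_nonneg (σ t)⟩ (x t j)
            * Real.exp ((2 * (lam * c t j) * (x t j - A t j) + lam * (c t j)^2)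
              / (2 * σ t ^ 2))) := by
      intro x
      erw [my_prod_prod_ofReal _ (fun t j => mul_nonneg (gaussianPDFReal_nonneg _ _ _)
        (Real.exp_nonneg _))]
      rw [← ENNReal.ofReal_mul (hFRnn x), ← ENNReal.ofReal_mul (Real.exp_nonneg _)]
      congr 1
      have hexpand : (∏ t, ∏ j,
          (gaussianPDFReal (A t j) ⟨σ t ^ 2, sq_nonneg (σ t)⟩ (x t j)
            * Real.exp ((2 * (lam * c t j) * (x t j - A t j) + lam * (c t j)^2)
              / (2 * σ t ^ 2))))
          = FR x * Real.exp (lam * L x) := by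
        simp_rw [Finset.prod_mul_distrib]
        congr 1
        rw [show lam * L x = ∑ t, ∑ j,
            (2 * (lam * c t j) * (x t j - A t j) + lam * (c t j)^2) / (2 * σ t ^ 2) by
          simp only [L, Finset.mul_sum]
          refine Finset.sum_congr rfl fun t _ => Finset.sum_congr rfl fun j _ => ?_
          rw [mul_div_assoc']
          congr 1
          ring]
        rw [Real.exp_sum]
        exact Finset.prod_congr rfl fun t _ => (Real.exp_sum _ _).symm
      rw [hexpand]
      rw [show lam * (L x - ε) = lam * L x + (-(lam * ε)) by ring, Real.exp_add]
      ring
    simp_rw [hpt]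
    have hg1 : Measurable fun x : Fin T → Fin d → ℝ => ∏ t, ∏ j, ENNReal.ofReal
        (gaussianPDFReal (A t j) ⟨σ t ^ 2, sq_nonneg (σ t)⟩ (x t j)
          * Real.exp ((2 * (lam * c t j) * (x t j - A t j) + lam * (c t j)^2)
            / (2 * σ t ^ 2))) := by
      refine Finset.measurable_prod _ fun t _ => Finset.measurable_prod _ fun j _ =>
        Measurable.ennreal_ofReal (Measurable.mul ?_ ?_)
      · exact (measurable_gaussianPDFReal _ _).comp
          ((measurable_pi_apply j).comp (measurable_pi_apply t))
      · have hx : Measurable fun x : Fin T → Fin d → ℝ => x t j :=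
          (measurable_pi_apply j).comp (measurable_pi_apply t)
        fun_prop
    rw [lintegral_const_mul _ hg1]
    rw [my_mgf_glue A (fun t j => lam * c t j) (fun t j => lam * (c t j)^2) σ hσ]
    rw [← ENNReal.ofReal_mul (Real.exp_nonneg _)]
    exact ENNReal.ofReal_le_ofReal (harith _ fun t j => rfl)
  have hmgf2 : ∫⁻ x, ENNReal.ofReal (GR x)
      * ENNReal.ofReal (Real.exp (lam * (-(L x) - ε))) ∂M ≤ ENNReal.ofReal δ := by
    have hpt : ∀ x, ENNReal.ofReal (GR x) * ENNReal.ofReal (Real.exp (lam * (-(L x) - ε)))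
        = ENNReal.ofReal (Real.exp (-(lam * ε))) * ∏ t, ∏ j, ENNReal.ofReal
          (gaussianPDFReal (Bm t j) ⟨σ t ^ 2, sq_nonneg (σ t)⟩ (x t j)
            * Real.exp ((2 * (-(lam * c t j)) * (x t j - Bm t j) + lam * (c t j)^2)
              / (2 * σ t ^ 2))) := by
      intro x
      erw [my_prod_prod_ofReal _ (fun t j => mul_nonneg (gaussianPDFReal_nonneg _ _ _)
        (Real.exp_nonneg _))]
      rw [← ENNReal.ofReal_mul (hGRnn x), ← ENNReal.ofReal_mul (Real.exp_nonneg _)]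
      congr 1
      have hexpand : (∏ t, ∏ j,
          (gaussianPDFReal (Bm t j) ⟨σ t ^ 2, sq_nonneg (σ t)⟩ (x t j)
            * Real.exp ((2 * (-(lam * c t j)) * (x t j - Bm t j) + lam * (c t j)^2)
              / (2 * σ t ^ 2))))
          = GR x * Real.exp (lam * (-(L x))) := by
        simp_rw [Finset.prod_mul_distrib]
        congr 1
        rw [show lam * (-(L x)) = ∑ t, ∑ j,
            (2 * (-(lam * c t j)) * (x t j - Bm t j) + lam * (c t j)^2) / (2 * σ t ^ 2) by
          simp only [L, Finset.mul_sum, neg_mul, mul_neg, ← Finset.sum_neg_distrib]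
          refine Finset.sum_congr rfl fun t _ => Finset.sum_congr rfl fun j _ => ?_
          rw [hAB t j, mul_div_assoc', ← neg_div]
          congr 1
          ring]
        rw [Real.exp_sum]
        exact Finset.prod_congr rfl fun t _ => (Real.exp_sum _ _).symm
      rw [hexpand]
      rw [show lam * (-(L x) - ε) = lam * (-(L x)) + (-(lam * ε)) by ring, Real.exp_add]
      ring
    simp_rw [hpt]
    have hg2 : Measurable fun x : Fin T → Fin d → ℝ => ∏ t, ∏ j, ENNReal.ofReal
        (gaussianPDFReal (Bm t j) ⟨σ t ^ 2, sq_nonneg (σ t)⟩ (x t j)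
          * Real.exp ((2 * (-(lam * c t j)) * (x t j - Bm t j) + lam * (c t j)^2)
            / (2 * σ t ^ 2))) := by
      refine Finset.measurable_prod _ fun t _ => Finset.measurable_prod _ fun j _ =>
        Measurable.ennreal_ofReal (Measurable.mul ?_ ?_)
      · exact (measurable_gaussianPDFReal _ _).comp
          ((measurable_pi_apply j).comp (measurable_pi_apply t))
      · have hx : Measurable fun x : Fin T → Fin d → ℝ => x t j :=
          (measurable_pi_apply j).comp (measurable_pi_apply t)
        fun_prop
    rw [lintegral_const_mul _ hg2]
    rw [my_mgf_glue Bm (fun t j => -(lam * c t j)) (fun t j => lam * (c t j)^2) σ hσ]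
    rw [← ENNReal.ofReal_mul (Real.exp_nonneg _)]
    exact ENNReal.ofReal_le_ofReal (harith _ fun t j => neg_sq _)
  -- assemble
  rw [hmeq1, hmeq2]
  constructor
  · refine my_dp_core M _ _ L (hFRmeas.ennreal_ofReal) (hGRmeas.ennreal_ofReal) hLmeas
      ε δ lam hlam (fun x hx => ?_) hmgf1 E hE
    rw [hreal x, ENNReal.ofReal_mul (hGRnn x), mul_comm (ENNReal.ofReal (Real.exp ε))]
    exact mul_le_mul_right (ENNReal.ofReal_le_ofReal (Real.exp_le_exp.mpr hx)) _
  · refine my_dp_core M _ _ (fun x => -(L x)) (hGRmeas.ennreal_ofReal)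
      (hFRmeas.ennreal_ofReal) hLmeas.neg ε δ lam hlam (fun x hx => ?_) hmgf2 E hE
    have hGF : GR x = FR x * Real.exp (-(L x)) := by
      rw [hreal x, mul_assoc, ← Real.exp_add, add_neg_cancel, Real.exp_zero, mul_one]
    rw [hGF, ENNReal.ofReal_mul (hFRnn x), mul_comm (ENNReal.ofReal (Real.exp ε))]
    exact mul_le_mul_right (ENNReal.ofReal_le_ofReal (Real.exp_le_exp.mpr hx)) _
end
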